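/- arXiv:2501.07187 — 8 statements merged into one kernel-verified Lean document; each statement's English description precedes it below -/
import Mathlib

section
/- For any rational γ = p/q with 0 < p ≤ q, the map sending k ∈ {0, 1, …, q−1} to the length-q production sequence (t_k(1), …, t_k(q)), where t_k(n) = ⌊n·γ + k/q⌋ − ⌊(n−1)·γ + k/q⌋, yields q sequences such that t_k(n) = t_0(n + k') for an appropriate shift; in particular, each t_k is a cyclic shift of t_0 determined by k. -/
/-!
With `g = gcd p q`, write `k = g m + r` with `0 ≤ r < g`. Every `n p + g m` is a multiple of `g`,
so its residue mod `q` is at most `q - g`, and adding `r` never crosses a multiple of `q`: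
`⌊(n p + k) / q⌋ = ⌊(n p + g m) / q⌋`. By Bézout there is `j ≥ 0` with `p j ≡ g m [ZMOD q]`,
say `p j = g m + q t`, whence `⌊(n p + k) / q⌋ = ⌊(n + j) p / q⌋ - t` for every `n`;
the constant `t` cancels in the differences.
-/

namespace Int

theorem add_ediv_eq_ediv_of_dvd_of_lt {g q c r : ℤ} (hq : 0 < q) (hgq : g ∣ q) (hgc : g ∣ c)
    (hr : 0 ≤ r) (hrg : r < g) : (c + r) / q = c / q := by
  have hg_res : g ∣ c % q := by
    rw [Int.emod_def]
    exact dvd_sub hgc (hgq.mul_right _)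
  have hres_lt : c % q < q := Int.emod_lt_of_pos c hq
  have hres_le : g ≤ q - c % q := Int.le_of_dvd (by omega) (dvd_sub hgq hg_res)
  have hres_nonneg : 0 ≤ c % q := Int.emod_nonneg c hq.ne'
  calc (c + r) / q
      = (c % q + r + q * (c / q)) / q := by congr 1; linarith [Int.mul_ediv_add_emod c q]
    _ = c / q := by
      rw [Int.add_mul_ediv_left _ _ hq.ne', Int.ediv_eq_zero_of_lt (by omega) (by omega),
        zero_add]

theorem exists_natCast_mul_modEq_gcd_mul (p : ℤ) {q : ℤ} (hq : 0 < q) (m : ℤ) :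
    ∃ j : ℕ, p * j ≡ (p.gcd q : ℤ) * m [ZMOD q] := by
  obtain ⟨j, hj⟩ := Int.eq_ofNat_of_zero_le (Int.emod_nonneg (gcdA p q * m) hq.ne')
  refine ⟨j, ?_⟩
  calc p * j ≡ p * (gcdA p q * m) [ZMOD q] := hj ▸ (Int.mod_modEq _ q).mul_left p
    _ = (p * gcdA p q + q * gcdB p q) * m - q * (gcdB p q * m) := by ring
    _ ≡ (p * gcdA p q + q * gcdB p q) * m [ZMOD q] :=
      Int.modEq_iff_dvd.2 ⟨gcdB p q * m, by ring⟩
    _ = (p.gcd q : ℤ) * m := by rw [← Int.gcd_eq_gcd_ab]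

theorem exists_ediv_add_eq_add_ediv_sub (p : ℤ) {q : ℤ} (hq : 0 < q) (k : ℤ) :
    ∃ (j : ℕ) (t : ℤ), ∀ c : ℤ, (c * p + k) / q = (c + j) * p / q - t := by
  set g : ℤ := (p.gcd q : ℤ)
  have hg : 0 < g := Int.natCast_pos.2 (Int.gcd_pos_of_ne_zero_right p hq.ne')
  obtain ⟨j, hj⟩ := exists_natCast_mul_modEq_gcd_mul p hq (k / g)
  obtain ⟨t, ht⟩ := hj.symm.dvd
  refine ⟨j, t, fun c => ?_⟩
  have hk_small : (c * p + k) / q = (c * p + g * (k / g)) / q := by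
    conv_lhs => rw [← Int.mul_ediv_add_emod k g, ← add_assoc]
    exact add_ediv_eq_ediv_of_dvd_of_lt hq (Int.gcd_dvd_right p q)
      (dvd_add ((Int.gcd_dvd_left p q).mul_left c) (dvd_mul_right g _))
      (Int.emod_nonneg k hg.ne') (Int.emod_lt_of_pos k hg)
  have hshift : (c + j) * p = c * p + g * (k / g) + q * t := by linear_combination ht
  rw [hk_small, hshift, Int.add_mul_ediv_left _ _ hq.ne']
  ring

end Int

theorem Rat.floor_intCast_mul_div_add_div (c p k : ℤ) (q : ℕ) :
    ⌊(c : ℚ) * (p / q) + k / q⌋ = (c * p + k) / q := by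
  rw [← Rat.floor_intCast_div_natCast]
  push_cast
  ring_nf

theorem production_sequence_cyclic_shift_general (p q k : ℕ)
    (hk : k < q) :
    ∃ k' : ℕ, ∀ n : ℕ, 1 ≤ n →
      ⌊(n : ℚ) * ((p : ℚ) / q) + (k : ℚ) / q⌋ -
        ⌊((n : ℚ) - 1) * ((p : ℚ) / q) + (k : ℚ) / q⌋ =
      ⌊((n : ℚ) + (k' : ℚ)) * ((p : ℚ) / q)⌋ -
        ⌊((n : ℚ) + (k' : ℚ) - 1) * ((p : ℚ) / q)⌋ := by
  obtain ⟨j, t, hshift⟩ := Int.exists_ediv_add_eq_add_ediv_sub p (q := q) (by omega) k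
  have key (c : ℤ) : ⌊(c : ℚ) * (p / q) + k / q⌋ = ⌊((c : ℚ) + j) * (p / q)⌋ - t := by
    have h₀ := Rat.floor_intCast_mul_div_add_div c p k q
    have h := Rat.floor_intCast_mul_div_add_div (c + j) p 0 q
    simp only [Int.cast_natCast, Int.cast_add, Int.cast_zero, zero_div, add_zero] at h₀ h
    rw [h₀, h, hshift]
  refine ⟨j, fun n _ => ?_⟩
  have h₁ := key n
  have h₂ := key (n - 1)
  push_cast at h₁ h₂
  rw [h₁, h₂, show (n : ℚ) - 1 + j = n + j - 1 by ring]
  ring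

/-- Varying the fractional initial tokens k/q cyclically shifts the production
sequence: the sequence t_k generated with residual k/q coincides with a shift
of the sequence t_0 generated with zero residual. -/
theorem production_sequence_cyclic_shift (p q k : ℕ) (hp : 0 < p) (hpq : p ≤ q)
    (hk : k < q) :
    ∃ k' : ℕ, ∀ n : ℕ, 1 ≤ n →
      ⌊(n : ℚ) * ((p : ℚ) / q) + (k : ℚ) / q⌋ -
        ⌊((n : ℚ) - 1) * ((p : ℚ) / q) + (k : ℚ) / q⌋ =
      ⌊((n : ℚ) + (k' : ℚ)) * ((p : ℚ) / q)⌋ -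
        ⌊((n : ℚ) + (k' : ℚ) - 1) * ((p : ℚ) / q)⌋ :=
  production_sequence_cyclic_shift_general p q k hk
end

section
/- Let q ≥ 1 and let s be a {0,1}-valued sequence of length q with exactly one entry equal to 1, at position j (1 ≤ j ≤ q). Then with rate γ = 1/q and residual r = (q − j)/q, the generated production sequence t(n) = ⌊n·γ + r⌋ − ⌊(n−1)·γ + r⌋ satisfies t(n) = s(n) for all 1 ≤ n ≤ q. -/
lemma ediv_zero_aux (a q : ℤ) (h0 : 0 ≤ a) (h1 : a < q) : a / q = 0 :=
  Int.ediv_eq_zero_of_lt h0 h1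

lemma ediv_one_aux (a q : ℤ) (hq : 0 < q) (h0 : q ≤ a) (h1 : a < 2 * q) : a / q = 1 := by
  have : a = (a - q) + 1 * q := by ring
  rw [this, Int.add_mul_ediv_right _ _ (ne_of_gt hq),
    ediv_zero_aux (a - q) q (by omega) (by omega)]; ring

/-- If s is a {0,1}-valued length-q sequence with exactly one 1, at position j,
then rate γ = 1/q and residual r = (q − j)/q generate s via the floor formula. -/
theorem production_sequence_single_one (q j : ℕ) (hq : 1 ≤ q) (hj1 : 1 ≤ j) (hjq : j ≤ q)
    (s : ℕ → ℤ)
    (hs01 : ∀ n, 1 ≤ n → n ≤ q → s n = 0 ∨ s n = 1)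
    (hsj : s j = 1)
    (hs0 : ∀ n, 1 ≤ n → n ≤ q → n ≠ j → s n = 0) :
    ∀ n, 1 ≤ n → n ≤ q →
      ⌊(n : ℚ) * (1 / q) + ((q : ℚ) - j) / q⌋ -
        ⌊((n : ℚ) - 1) * (1 / q) + ((q : ℚ) - j) / q⌋ = s n := by
  intro n hn1 hnq
  have hq0 : (q : ℚ) ≠ 0 := by positivity
  have e1 : (n : ℚ) * (1 / q) + ((q : ℚ) - j) / q
      = (((n : ℤ) + q - j : ℤ) : ℚ) / (q : ℕ) := by
    push_cast; field_simp; ring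
  have e2 : ((n : ℚ) - 1) * (1 / q) + ((q : ℚ) - j) / q
      = (((n : ℤ) - 1 + q - j : ℤ) : ℚ) / (q : ℕ) := by
    push_cast; field_simp; ring
  rw [e1, e2, Rat.floor_intCast_div_natCast _ q, Rat.floor_intCast_div_natCast _ q]
  have hqZ : (0 : ℤ) < q := by exact_mod_cast hq
  rcases lt_trichotomy n j with h | h | h
  · rw [hs0 n hn1 hnq (by omega),
      ediv_zero_aux _ _ (by push_cast; omega) (by push_cast; omega),
      ediv_zero_aux _ _ (by push_cast; omega) (by push_cast; omega)]; norm_num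
  · subst h
    rw [hsj, ediv_one_aux _ _ hqZ (by push_cast; omega) (by push_cast; omega),
      ediv_zero_aux _ _ (by push_cast; omega) (by push_cast; omega)]; norm_num
  · rw [hs0 n hn1 hnq (by omega),
      ediv_one_aux _ _ hqZ (by push_cast; omega) (by push_cast; omega),
      ediv_one_aux _ _ hqZ (by push_cast; omega) (by push_cast; omega)]; norm_num
end

section
/- Let q ≥ 1 and let s be a {0,1}-valued sequence of length q with exactly one entry equal to 1, at position j. Then with rate γ = 1/q and residual r = (j − 1)/q, the generated consumption sequence s'(n) = ⌈n·γ − r⌉ − ⌈(n−1)·γ − r⌉ equals s(n) for all 1 ≤ n ≤ q. -/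
/-!
With `m = n - j`, the two ceilings are `⌈(m + 1) / q⌉` and `⌈m / q⌉`. Since `1 ≤ n, j ≤ q` forces
`-q < m < q`, each of these ceilings is `1` when its numerator is positive and `0` otherwise, so
their difference is `1` exactly when `m = 0`, i.e. at `n = j`.
-/

namespace Int

variable {α : Type*} [Field α] [LinearOrder α] [IsStrictOrderedRing α] [FloorRing α]

theorem ceil_intCast_div_natCast_eq_one {m : ℤ} {q : ℕ} (hm : 0 < m) (hmq : m ≤ q) :
    ⌈(m : α) / q⌉ = 1 := by
  have hq : (0 : α) < q := by exact_mod_cast hm.trans_le hmq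
  rw [ceil_eq_iff, cast_one, sub_self]
  exact ⟨div_pos (by exact_mod_cast hm) hq, (div_le_one hq).2 (by exact_mod_cast hmq)⟩

theorem ceil_intCast_div_natCast_eq_zero {m : ℤ} {q : ℕ} (hm : -q < m) (hm0 : m ≤ 0) :
    ⌈(m : α) / q⌉ = 0 := by
  have hq : (0 : α) < q := by exact_mod_cast (neg_lt_zero.1 (hm.trans_le hm0))
  rw [ceil_eq_zero_iff, Set.mem_Ioc, lt_div_iff₀ hq]
  exact ⟨by simpa using (show ((-q : ℤ) : α) < m by exact_mod_cast hm),
    div_nonpos_of_nonpos_of_nonneg (by exact_mod_cast hm0) hq.le⟩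

theorem ceil_add_one_div_sub_ceil_div {m : ℤ} {q : ℕ} (hm : -q < m) (hmq : m < q) :
    ⌈((m + 1 : ℤ) : α) / q⌉ - ⌈(m : α) / q⌉ = if m = 0 then 1 else 0 := by
  rcases lt_trichotomy m 0 with hneg | rfl | hpos
  · rw [ceil_intCast_div_natCast_eq_zero (by omega) (by omega),
      ceil_intCast_div_natCast_eq_zero hm hneg.le, if_neg hneg.ne, sub_self]
  · rw [ceil_intCast_div_natCast_eq_one (by omega) (by omega),
      ceil_intCast_div_natCast_eq_zero hm le_rfl, if_pos rfl, sub_zero]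
  · rw [ceil_intCast_div_natCast_eq_one (by omega) (by omega),
      ceil_intCast_div_natCast_eq_one hpos hmq.le, if_neg hpos.ne', sub_self]

end Int

theorem consumption_sequence_single_one_general (q j : ℕ) (hj1 : 1 ≤ j) (hjq : j ≤ q)
    (s : ℕ → ℤ)
    (hsj : s j = 1)
    (hs0 : ∀ n, 1 ≤ n → n ≤ q → n ≠ j → s n = 0) :
    ∀ n, 1 ≤ n → n ≤ q →
      ⌈(n : ℚ) * (1 / q) - ((j : ℚ) - 1) / q⌉ -
        ⌈((n : ℚ) - 1) * (1 / q) - ((j : ℚ) - 1) / q⌉ = s n := by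
  intro n hn1 hnq
  have hcur : (n : ℚ) * (1 / q) - ((j : ℚ) - 1) / q = (((n - j : ℤ) + 1 : ℤ) : ℚ) / q := by
    push_cast; ring
  have hprev : ((n : ℚ) - 1) * (1 / q) - ((j : ℚ) - 1) / q = ((n - j : ℤ) : ℚ) / q := by
    push_cast; ring
  rw [hcur, hprev, Int.ceil_add_one_div_sub_ceil_div (by omega) (by omega)]
  by_cases hnj : n = j
  · rw [if_pos (by omega), hnj, hsj]
  · rw [if_neg (by omega), hs0 n hn1 hnq hnj]

/-- If s is a {0,1}-valued length-q sequence with exactly one 1, at position j,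
then rate γ = 1/q and residual r = (j − 1)/q generate s via the ceiling formula. -/
theorem consumption_sequence_single_one (q j : ℕ) (hq : 1 ≤ q) (hj1 : 1 ≤ j) (hjq : j ≤ q)
    (s : ℕ → ℤ)
    (hs01 : ∀ n, 1 ≤ n → n ≤ q → s n = 0 ∨ s n = 1)
    (hsj : s j = 1)
    (hs0 : ∀ n, 1 ≤ n → n ≤ q → n ≠ j → s n = 0) :
    ∀ n, 1 ≤ n → n ≤ q →
      ⌈(n : ℚ) * (1 / q) - ((j : ℚ) - 1) / q⌉ -
        ⌈((n : ℚ) - 1) * (1 / q) - ((j : ℚ) - 1) / q⌉ = s n :=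
  consumption_sequence_single_one_general q j hj1 hjq s hsj hs0
end

section
/- For the production-sequence generation, the map from k ∈ {0, …, q−1} to the sequence (t_k(1), …, t_k(q)) with t_k(n) = ⌊n·p/q + k/q⌋ − ⌊(n−1)·p/q + k/q⌋ is injective whenever gcd(p, q) = 1 and 0 < p < q. -/
/-!
Clearing denominators, `⌊n p / q + k / q⌋ = (n p + k) / q` in `ℕ`, so the production sequence is
the sequence of increments of `n ↦ (n p + k) / q`; as these quotients start from `0` (because `k < q`),
equal sequences force equal quotients for all `n ≤ q`. If `k < k'`, invertibility of `p`
modulo `q` gives `m < q` with `q ∣ m p + k'`, and then `(m p + k) / q < (m p + k') / q`.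
-/

lemma Rat.floor_mul_div_add_div (m p j q : ℕ) :
    ⌊(m : ℚ) * ((p : ℚ) / q) + (j : ℚ) / q⌋ = (((m * p + j) / q : ℕ) : ℤ) := by
  rw [show (m : ℚ) * ((p : ℚ) / q) + (j : ℚ) / q = ((m * p + j : ℕ) : ℚ) / q by push_cast; ring,
    Rat.floor_natCast_div_natCast, Int.natCast_ediv]

lemma eq_of_sub_eq_sub_succ {G : Type*} [AddCommGroup G] {f g : ℕ → G} {N : ℕ}
    (h₀ : f 0 = g 0) (h : ∀ i < N, f (i + 1) - f i = g (i + 1) - g i) :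
    ∀ m ≤ N, f m = g m := by
  intro m hm
  induction m with
  | zero => exact h₀
  | succ m ih =>
    rw [← sub_add_cancel (f (m + 1)) (f m), h m hm, ih (by omega), sub_add_cancel]

lemma Nat.exists_lt_dvd_mul_add {p q : ℕ} (hcop : p.Coprime q) (hq : 0 < q) (k : ℕ) :
    ∃ m < q, q ∣ m * p + k := by
  have : NeZero q := ⟨hq.ne'⟩
  refine ⟨(-(k : ZMod q) * (p : ZMod q)⁻¹).val, ZMod.val_lt _, ?_⟩
  rw [← ZMod.natCast_eq_zero_iff]
  push_cast
  rw [ZMod.natCast_val, ZMod.cast_id, mul_assoc, ZMod.inv_mul_of_unit _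
    ((ZMod.isUnit_iff_coprime p q).mpr hcop)]
  ring

lemma Nat.exists_lt_div_lt_div_mul_add {p q k k' : ℕ} (hcop : p.Coprime q) (hq : 0 < q)
    (hkk' : k < k') : ∃ m < q, (m * p + k) / q < (m * p + k') / q := by
  obtain ⟨m, hm, hdvd⟩ := Nat.exists_lt_dvd_mul_add hcop hq k'
  exact ⟨m, hm, Nat.div_lt_div_of_lt_of_dvd hdvd (by omega)⟩

lemma Nat.eq_of_forall_mul_add_div_eq {p q k k' : ℕ} (hcop : p.Coprime q) (hq : 0 < q)
    (h : ∀ m < q, (m * p + k) / q = (m * p + k') / q) : k = k' := by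
  rcases lt_trichotomy k k' with hlt | heq | hgt
  · obtain ⟨m, hm, hlt'⟩ := Nat.exists_lt_div_lt_div_mul_add hcop hq hlt
    exact absurd (h m hm) hlt'.ne
  · exact heq
  · obtain ⟨m, hm, hlt'⟩ := Nat.exists_lt_div_lt_div_mul_add hcop hq hgt
    exact absurd (h m hm) hlt'.ne'

theorem production_sequence_injective_general (p q : ℕ)
    (hcop : Nat.Coprime p q) (k k' : ℕ) (hk : k < q) (hk' : k' < q)
    (h : ∀ n ∈ Finset.Icc 1 q,
      ⌊(n : ℚ) * ((p : ℚ) / q) + (k : ℚ) / q⌋ -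
        ⌊((n : ℚ) - 1) * ((p : ℚ) / q) + (k : ℚ) / q⌋ =
      ⌊(n : ℚ) * ((p : ℚ) / q) + (k' : ℚ) / q⌋ -
        ⌊((n : ℚ) - 1) * ((p : ℚ) / q) + (k' : ℚ) / q⌋) :
    k = k' := by
  have hq : 0 < q := by omega
  have hquot := eq_of_sub_eq_sub_succ (N := q)
    (f := fun m => (((m * p + k) / q : ℕ) : ℤ)) (g := fun m => (((m * p + k') / q : ℕ) : ℤ))
    (by simp [Nat.div_eq_of_lt hk, Nat.div_eq_of_lt hk'])
    (fun i hi => by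
      have hi := h (i + 1) (Finset.mem_Icc.mpr ⟨by omega, hi⟩)
      rw [Nat.cast_succ, add_sub_cancel_right, ← Nat.cast_succ] at hi
      simpa only [Rat.floor_mul_div_add_div] using hi)
  exact Nat.eq_of_forall_mul_add_div_eq hcop hq fun m hm => by exact_mod_cast hquot m hm.le

/-- For gcd(p, q) = 1 and 0 < p < q, the map k ↦ (t_k(1), …, t_k(q)) from fractional
initial-token numerators to production sequences is injective. -/
theorem production_sequence_injective (p q : ℕ) (hp : 0 < p) (hpq : p < q)
    (hcop : Nat.Coprime p q) (k k' : ℕ) (hk : k < q) (hk' : k' < q)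
    (h : ∀ n ∈ Finset.Icc 1 q,
      ⌊(n : ℚ) * ((p : ℚ) / q) + (k : ℚ) / q⌋ -
        ⌊((n : ℚ) - 1) * ((p : ℚ) / q) + (k : ℚ) / q⌋ =
      ⌊(n : ℚ) * ((p : ℚ) / q) + (k' : ℚ) / q⌋ -
        ⌊((n : ℚ) - 1) * ((p : ℚ) / q) + (k' : ℚ) / q⌋) :
    k = k' :=
  production_sequence_injective_general p q hcop k k' hk hk' h
end

section
/- Let γ_prod, γ_cons be positive rationals and [c] a rational number of initial tokens with residual r = [c] − ⌊[c]⌋. Define α₁(p) = ⌈(⌈p·γ_cons − r⌉ − [c]) / γ_prod⌉. Then for every positive integer p, after α₁(p) jobs of the producer the cumulative number of whole tokens available, ⌊α₁(p)·γ_prod + [c]⌋ + r, is at least p·γ_cons, i.e., the consumer's p-th job can consume its tokens; moreover α₁(p) is the minimal such number of producer jobs when [c] is an integer and r = 0. -/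
/-- After α₁(p) = ⌈(⌈p·γ_cons − r⌉ − [c]) / γ_prod⌉ producer jobs, the cumulative
whole tokens available ⌊α₁(p)·γ_prod + [c]⌋ + r are at least p·γ_cons; moreover,
when the initial tokens are an integer (r = 0), α₁(p) is minimal with this property. -/
theorem alpha_one_enables_and_minimal (γp γc c : ℚ) (hγp : 0 < γp) (hγc : 0 < γc)
    (p : ℕ) (hp : 0 < p) :
    ((⌊(((⌈((⌈(p : ℚ) * γc - (c - ⌊c⌋)⌉ : ℚ) - c) / γp⌉ : ℤ) : ℚ)) * γp + c⌋ : ℚ) +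
        (c - ⌊c⌋) ≥ (p : ℚ) * γc) ∧
    (c - ⌊c⌋ = 0 → ∀ m : ℤ,
      ((⌊(m : ℚ) * γp + c⌋ : ℚ) + (c - ⌊c⌋) ≥ (p : ℚ) * γc) →
      ⌈((⌈(p : ℚ) * γc - (c - ⌊c⌋)⌉ : ℚ) - c) / γp⌉ ≤ m) := by
  set r : ℚ := c - ⌊c⌋ with hr
  set N : ℤ := ⌈(p : ℚ) * γc - r⌉ with hN
  set α : ℤ := ⌈((N : ℚ) - c) / γp⌉ with hα
  constructor
  · -- α γp + c ≥ N since α ≥ (N - c)/γp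
    have h1 : ((N : ℚ) - c) / γp ≤ (α : ℚ) := Int.le_ceil _
    have h2 : (N : ℚ) - c ≤ (α : ℚ) * γp := by
      have := mul_le_mul_of_nonneg_right h1 (le_of_lt hγp)
      rwa [div_mul_cancel₀ _ (ne_of_gt hγp)] at this
    have h3 : (N : ℚ) ≤ (α : ℚ) * γp + c := by linarith
    have h4 : (N : ℚ) ≤ (⌊(α : ℚ) * γp + c⌋ : ℚ) := by
      exact_mod_cast Int.le_floor.mpr (by exact_mod_cast h3)
    have h5 : (p : ℚ) * γc - r ≤ (N : ℚ) := Int.le_ceil _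
    linarith
  · intro hr0 m hm
    rw [hr0, add_zero] at hm
    have h4 : (N : ℚ) ≤ (⌊(m : ℚ) * γp + c⌋ : ℚ) := by
      have : N ≤ ⌊(m : ℚ) * γp + c⌋ := by
        rw [hN, hr0, sub_zero]
        exact Int.ceil_le.mpr hm
      exact_mod_cast this
    have h5 : (⌊(m : ℚ) * γp + c⌋ : ℚ) ≤ (m : ℚ) * γp + c := Int.floor_le _
    have h6 : ((N : ℚ) - c) / γp ≤ (m : ℚ) := by
      rw [div_le_iff₀ hγp]; linarith
    exact Int.ceil_le.mpr (by exact_mod_cast h6)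
end

section
/- Let γ_prod > 0 and γ_cons > 0 be rationals, [c] ∈ ℤ initial tokens (r = 0). Define α₁(p) = ⌈(⌈p·γ_cons⌉ − [c]) / γ_prod⌉ and β₁(p) = 1 + ⌊⌊(α₁(p) − 1)·γ_prod + [c]⌋ / γ_cons⌋. Then β₁(p) ≤ p for all positive integers p, i.e., the consumer job enabled just before the α₁(p)-th producer job does not exceed p. -/
/-- With integer initial tokens (r = 0), the consumer job index
β₁(p) = 1 + ⌊⌊(α₁(p) − 1)·γ_prod + [c]⌋ / γ_cons⌋ enabled just before producer job
α₁(p) = ⌈(⌈p·γ_cons⌉ − [c]) / γ_prod⌉ does not exceed p. -/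
theorem beta_one_le (γp γc : ℚ) (c : ℤ) (hγp : 0 < γp) (hγc : 0 < γc)
    (p : ℕ) (hp : 0 < p) :
    1 + ⌊(⌊(((⌈((⌈(p : ℚ) * γc⌉ : ℚ) - (c : ℚ)) / γp⌉ : ℤ) : ℚ) - 1) * γp + (c : ℚ)⌋ : ℚ) / γc⌋
      ≤ (p : ℤ) := by
  set x : ℚ := ((⌈(p : ℚ) * γc⌉ : ℚ) - (c : ℚ)) / γp with hx
  set A : ℤ := ⌈x⌉ with hA
  have h1 : (A : ℚ) - 1 < x := by
    have := Int.ceil_lt_add_one x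
    linarith
  have h2 : ((A : ℚ) - 1) * γp + (c : ℚ) < (⌈(p : ℚ) * γc⌉ : ℚ) := by
    have := (mul_lt_mul_of_pos_right h1 hγp)
    rw [hx, div_mul_cancel₀ _ (ne_of_gt hγp)] at this
    linarith
  set F : ℤ := ⌊((A : ℚ) - 1) * γp + (c : ℚ)⌋ with hF
  have h3 : F < ⌈(p : ℚ) * γc⌉ := by
    have h := Int.floor_le (((A : ℚ) - 1) * γp + (c : ℚ))
    rw [← hF] at h
    exact_mod_cast lt_of_le_of_lt h h2
  have h4 : (F : ℚ) < (p : ℚ) * γc := by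
    have h5 : ((F : ℚ)) ≤ ((⌈(p : ℚ) * γc⌉ : ℤ) : ℚ) - 1 := by
      have : F ≤ ⌈(p : ℚ) * γc⌉ - 1 := by omega
      push_cast
      exact_mod_cast this
    have := Int.ceil_lt_add_one ((p : ℚ) * γc)
    linarith
  have h6 : (F : ℚ) / γc < (p : ℚ) := by
    rwa [div_lt_iff₀ hγc]
  have h7 : ⌊(F : ℚ) / γc⌋ < (p : ℤ) := by
    rw [Int.floor_lt]
    exact_mod_cast h6
  omega
end

section
/- Let γ_prod > 0, γ_cons > 0 be rationals and [c] ∈ ℤ (r = 0). Define α₂(n) = 1 + ⌊⌊(n−1)·γ_prod + [c]⌋ / γ_cons⌋ and β₂(n) = ⌈(⌈α₂(n)·γ_cons⌉ − [c]) / γ_prod⌉. Then β₂(n) ≥ n for all positive integers n. -/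
/-- With integer initial tokens (r = 0), the last producer job needed by consumer job
α₂(n) = 1 + ⌊⌊(n−1)·γ_prod + [c]⌋ / γ_cons⌋, namely
β₂(n) = ⌈(⌈α₂(n)·γ_cons⌉ − [c]) / γ_prod⌉, satisfies β₂(n) ≥ n. -/
theorem beta_two_ge (γp γc : ℚ) (c : ℤ) (hγp : 0 < γp) (hγc : 0 < γc)
    (n : ℕ) (hn : 0 < n) :
    ⌈((⌈(((1 + ⌊(⌊((n : ℚ) - 1) * γp + (c : ℚ)⌋ : ℚ) / γc⌋ : ℤ) : ℚ)) * γc⌉ : ℚ) - (c : ℚ)) / γp⌉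
      ≥ (n : ℤ) := by
  set m : ℤ := ⌊((n : ℚ) - 1) * γp + (c : ℚ)⌋ with hm
  set α : ℤ := 1 + ⌊(m : ℚ) / γc⌋ with hα
  -- α·γc > m
  have h1 : (m : ℚ) / γc < (α : ℚ) := by
    have := Int.lt_floor_add_one ((m : ℚ) / γc)
    push_cast [hα]; linarith
  have h2 : (m : ℚ) < (α : ℚ) * γc := (div_lt_iff₀ hγc).mp h1
  have h3 : m + 1 ≤ ⌈(α : ℚ) * γc⌉ := Int.lt_ceil.mpr h2
  -- m + 1 > (n−1)γp + c
  have h4 : ((n : ℚ) - 1) * γp + (c : ℚ) < (m : ℚ) + 1 := Int.lt_floor_add_one _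
  -- hence the final quotient exceeds n − 1
  have h5 : ((n : ℚ) - 1) < ((⌈(α : ℚ) * γc⌉ : ℚ) - (c : ℚ)) / γp := by
    rw [lt_div_iff₀ hγp]
    have h3' : (m : ℚ) + 1 ≤ (⌈(α : ℚ) * γc⌉ : ℚ) := by exact_mod_cast h3
    linarith
  have h6 : (n : ℤ) - 1 < ⌈((⌈(α : ℚ) * γc⌉ : ℚ) - (c : ℚ)) / γp⌉ := by
    apply Int.lt_ceil.mpr
    push_cast
    exact h5
  omega
end

section
/- Let γ_prod, γ_cons > 0 be rationals and [c] ∈ ℤ, and let α₁(p) = ⌈(⌈p·γ_cons⌉ − [c]) / γ_prod⌉. Then for all positive integers n and p: α₁(p) ≤ n ⟺ ⌈p·γ_cons⌉ ≤ ⌊n·γ_prod⌋ + [c]. -/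
/-- Galois-connection characterization of α₁: consumer job p is enabled after
producer job n exactly when ⌈p·γ_cons⌉ ≤ ⌊n·γ_prod⌋ + [c], i.e.
α₁(p) = ⌈(⌈p·γ_cons⌉ − [c]) / γ_prod⌉ ≤ n ⟺ ⌈p·γ_cons⌉ ≤ ⌊n·γ_prod⌋ + [c]. -/
theorem alpha_one_galois (γp γc : ℚ) (c : ℤ) (hγp : 0 < γp) (hγc : 0 < γc)
    (n p : ℕ) (hn : 0 < n) (hp : 0 < p) :
    ⌈((⌈(p : ℚ) * γc⌉ : ℚ) - (c : ℚ)) / γp⌉ ≤ (n : ℤ) ↔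
      ⌈(p : ℚ) * γc⌉ ≤ ⌊(n : ℚ) * γp⌋ + c := by
  rw [Int.ceil_le, div_le_iff₀ hγp, sub_le_iff_le_add]
  rw [show ((n : ℤ) : ℚ) * γp + (c : ℚ) = ((n : ℚ) * γp + (c : ℚ)) by push_cast; ring]
  constructor
  · intro h
    have := Int.le_floor.mpr h
    rwa [Int.floor_add_intCast] at this
  · intro h
    calc ((⌈(p : ℚ) * γc⌉ : ℤ) : ℚ) ≤ ((⌊(n : ℚ) * γp⌋ + c : ℤ) : ℚ) := by exact_mod_cast h
      _ ≤ (n : ℚ) * γp + (c : ℚ) := by push_cast; linarith [Int.floor_le ((n : ℚ) * γp)]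
end
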